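/- There exists a constant c = c(n) such that for every A ∈ ℝ^{n×n}, |sym(A) − Id| ≤ c · dist(A, SO(n)) + c · |A − Id|², where sym(A) = (A + Aᵀ)/2. -/

import Mathlib

open MeasureTheory Matrix
open scoped RealInnerProductSpace ENNReal
noncomputable section

/-- `ℝⁿ` as a Euclidean space. -/
abbrev En (n : ℕ) := EuclideanSpace ℝ (Fin n)

/-- The gradient matrix `(Du)_{ij} = ∂u_i/∂x_j` of `u : ℝⁿ → ℝⁿ`. -/
def Dmat {n : ℕ} (u : En n → En n) (x : En n) : Matrix (Fin n) (Fin n) ℝ :=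
  Matrix.of fun i j => fderiv ℝ u x (EuclideanSpace.single j 1) i

/-- Frobenius (Euclidean) norm of a matrix. -/
def frobNorm {n : ℕ} (A : Matrix (Fin n) (Fin n) ℝ) : ℝ :=
  Real.sqrt (∑ i, ∑ j, (A i j) ^ 2)

/-- The special orthogonal group `SO(n)` as a set of matrices. -/
def SOn (n : ℕ) : Set (Matrix (Fin n) (Fin n) ℝ) := {Q | Qᵀ * Q = 1 ∧ Q.det = 1}

/-- Frobenius distance of a matrix to `SO(n)`. -/
def distSO {n : ℕ} (A : Matrix (Fin n) (Fin n) ℝ) : ℝ :=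
  sInf ((fun Q => frobNorm (A - Q)) '' SOn n)

/-- Symmetric part `(A + Aᵀ)/2` of a matrix. -/
def symMat {n : ℕ} (A : Matrix (Fin n) (Fin n) ℝ) : Matrix (Fin n) (Fin n) ℝ :=
  (1 / 2 : ℝ) • (A + Aᵀ)

/-- A set has Lipschitz boundary: near every boundary point, after choosing a unit
normal direction `e`, the set coincides with the subgraph of a Lipschitz function. -/
def HasLipschitzBoundary {n : ℕ} (Ω : Set (En n)) : Prop :=
  ∀ x ∈ frontier Ω, ∃ r > (0 : ℝ), ∃ e : En n, ‖e‖ = 1 ∧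
    ∃ L : NNReal, ∃ φ : En n → ℝ, LipschitzWith L φ ∧
      ∀ y ∈ Metric.ball x r, (y ∈ Ω ↔ ⟪y - x, e⟫ < φ (y - x - ⟪y - x, e⟫ • e))

/-- `u ∈ W^{1,1}(Ω; ℝⁿ)`, encoded by differentiability on `Ω` together with
integrability of the gradient on `Ω`. -/
def W11 {n : ℕ} (Ω : Set (En n)) (u : En n → En n) : Prop :=
  (∀ x ∈ Ω, DifferentiableAt ℝ u x) ∧
    MemLp (fun x => frobNorm (Dmat u x)) 1 (volume.restrict Ω)

/-- A matrix field is a.e.-measurable (entrywise). -/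
def AEMeasMat {n : ℕ} (A : En n → Matrix (Fin n) (Fin n) ℝ)
    (μ : MeasureTheory.Measure (En n)) : Prop :=
  ∀ i j, AEMeasurable (fun x => A x i j) μ

/-!
For any orthogonal `Q`, the identity `QᵀQ = 1` gives
`sym A - 1 = sym (A - Q) - ½ (Q - 1)ᵀ (Q - 1)`, so `|sym A - 1| ≤ |A - Q| + ½ |Q - 1|²`.
The quadratic term is absorbed using `|Q - 1| ≤ |A - Q| + |A - 1|` and the a priori bound
`|Q - 1| ≤ 2√n`: either `|Q - 1| ≤ 2|A - 1|`, or `|Q - 1| < 2|A - Q|`.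
Taking the infimum over `Q ∈ SO(n)` gives the claim with `c = 2 + 2√n`.
-/

lemma sq_div_two_le_of_le_add {x a b M : ℝ} (hx : 0 ≤ x) (ha : 0 ≤ a) (hxM : x ≤ M)
    (hxab : x ≤ a + b) : x ^ 2 / 2 ≤ M * a + 2 * b ^ 2 := by
  rcases le_or_gt x (2 * b) with h | h
  · nlinarith [mul_nonneg (hx.trans hxM) ha]
  · nlinarith [mul_le_mul_of_nonneg_right hxM ha]

section Frobenius

attribute [local instance] Matrix.frobeniusNormedAddCommGroup Matrix.frobeniusNormedSpace

lemma frobNorm_eq_norm {n : ℕ} (A : Matrix (Fin n) (Fin n) ℝ) : frobNorm A = ‖A‖ := by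
  rw [Matrix.frobenius_norm_def, frobNorm, Real.sqrt_eq_rpow]
  simp only [Real.norm_eq_abs, Real.rpow_two, sq_abs]

lemma frobenius_norm_of_transpose_mul_self_eq_one {ι : Type*} [Fintype ι] [DecidableEq ι]
    {Q : Matrix ι ι ℝ} (hQ : Qᵀ * Q = 1) : ‖Q‖ = √(Fintype.card ι) := by
  have htrace := congrArg Matrix.trace hQ
  rw [Matrix.trace_one] at htrace
  simp only [Matrix.trace, Matrix.diag, Matrix.mul_apply,
    Matrix.transpose_apply] at htrace
  rw [Matrix.frobenius_norm_def, Real.sqrt_eq_rpow, Finset.sum_comm, ← htrace]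
  simp only [Real.norm_eq_abs, Real.rpow_two, sq_abs, ← sq]

lemma frobenius_norm_sub_one_le_of_transpose_mul_self_eq_one {ι : Type*} [Fintype ι]
    [DecidableEq ι] {Q : Matrix ι ι ℝ} (hQ : Qᵀ * Q = 1) :
    ‖Q - 1‖ ≤ 2 * √(Fintype.card ι) := by
  have hone : ‖(1 : Matrix ι ι ℝ)‖ = √(Fintype.card ι) :=
    frobenius_norm_of_transpose_mul_self_eq_one (by simp)
  calc ‖Q - 1‖ ≤ ‖Q‖ + ‖(1 : Matrix ι ι ℝ)‖ := norm_sub_le _ _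
    _ = 2 * √(Fintype.card ι) := by
      rw [frobenius_norm_of_transpose_mul_self_eq_one hQ, hone]; ring

lemma half_add_transpose_sub_one_eq {ι : Type*} [Fintype ι] [DecidableEq ι]
    (A : Matrix ι ι ℝ) {Q : Matrix ι ι ℝ} (hQ : Qᵀ * Q = 1) :
    (1 / 2 : ℝ) • (A + Aᵀ) - 1 =
      (1 / 2 : ℝ) • ((A - Q) + (A - Q)ᵀ) - (1 / 2 : ℝ) • ((Q - 1)ᵀ * (Q - 1)) := by
  simp only [Matrix.transpose_sub, Matrix.transpose_one, Matrix.sub_mul, Matrix.mul_sub,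
    Matrix.one_mul, Matrix.mul_one, hQ]
  module

lemma norm_symMat_sub_one_le {n : ℕ} (A : Matrix (Fin n) (Fin n) ℝ)
    {Q : Matrix (Fin n) (Fin n) ℝ} (hQ : Qᵀ * Q = 1) :
    ‖symMat A - 1‖ ≤ ‖A - Q‖ + ‖Q - 1‖ ^ 2 / 2 := by
  have hsym : ‖(A - Q) + (A - Q)ᵀ‖ ≤ 2 * ‖A - Q‖ := by
    simpa only [Matrix.frobenius_norm_transpose, two_mul] using norm_add_le (A - Q) (A - Q)ᵀ
  have hquad : ‖(Q - 1)ᵀ * (Q - 1)‖ ≤ ‖Q - 1‖ ^ 2 := by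
    simpa only [Matrix.frobenius_norm_transpose, sq] using
      Matrix.frobenius_norm_mul (Q - 1)ᵀ (Q - 1)
  rw [symMat, half_add_transpose_sub_one_eq A hQ]
  refine (norm_sub_le _ _).trans ?_
  rw [norm_smul, norm_smul, Real.norm_of_nonneg (by norm_num)]
  linarith

lemma norm_symMat_sub_one_le_of_orthogonal {n : ℕ} (A : Matrix (Fin n) (Fin n) ℝ)
    {Q : Matrix (Fin n) (Fin n) ℝ} (hQ : Qᵀ * Q = 1) :
    ‖symMat A - 1‖ ≤ (2 + 2 * √n) * ‖A - Q‖ + (2 + 2 * √n) * ‖A - 1‖ ^ 2 := by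
  have hQ1 : ‖Q - 1‖ ≤ ‖A - Q‖ + ‖A - 1‖ := by
    simpa only [sub_sub_sub_cancel_left, add_comm] using norm_sub_le (A - 1) (A - Q)
  have hquad := sq_div_two_le_of_le_add (norm_nonneg _) (norm_nonneg _)
    (by simpa using frobenius_norm_sub_one_le_of_transpose_mul_self_eq_one hQ) hQ1
  nlinarith [norm_symMat_sub_one_le A hQ, norm_nonneg (A - Q), sq_nonneg ‖A - 1‖,
    Real.sqrt_nonneg n]

end Frobenius

lemma le_distSO {n : ℕ} {A : Matrix (Fin n) (Fin n) ℝ} {r : ℝ}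
    (h : ∀ Q ∈ SOn n, r ≤ frobNorm (A - Q)) : r ≤ distSO A :=
  le_csInf ⟨_, 1, ⟨by simp, by simp⟩, rfl⟩ (by rintro _ ⟨Q, hQ, rfl⟩; exact h Q hQ)

/-- Taylor expansion of the distance to `SO(n)` at the identity. -/
theorem sym_sub_id_le_distSO (n : ℕ) :
    ∃ c : ℝ, 0 < c ∧ ∀ A : Matrix (Fin n) (Fin n) ℝ,
      frobNorm (symMat A - 1) ≤ c * distSO A + c * (frobNorm (A - 1)) ^ 2 := by
  have hc : 0 < 2 + 2 * √n := by positivity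
  refine ⟨2 + 2 * √n, hc, fun A => ?_⟩
  have hdist : (frobNorm (symMat A - 1) - (2 + 2 * √n) * frobNorm (A - 1) ^ 2) / (2 + 2 * √n)
      ≤ distSO A := by
    refine le_distSO fun Q hQ => ?_
    rw [div_le_iff₀ hc]
    simp only [frobNorm_eq_norm] at *
    linarith [norm_symMat_sub_one_le_of_orthogonal A hQ.1]
  rw [div_le_iff₀ hc] at hdist
  linarith
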